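/- arXiv:2311.11983 — 3 statements merged into one kernel-verified Lean document; each statement's English description precedes it below -/
import Mathlib

section
/- For all n ≥ 1 and i_0, ..., i_n ≥ 0, the boundary of the representable (n+1)-fold simplicial set Δ[i_n, ..., i_0] decomposes as a pushout: ∂Δ[i_n,...,i_0] ≅ (Δ[i_n,...,i_1,0] × ∂F(i_0)) ⊔_{∂Δ[i_n,...,i_1,0] × ∂F(i_0)} (∂Δ[i_n,...,i_1,0] × F(i_0)), where F(i_0) denotes the presheaf on Δ^{n+1} depending only on the last coordinate via Δ[i_0], and ∂ denotes removing the top cell. Equivalently: a map ([j_n],...,[j_0]) → ([i_n],...,[i_0]) in Δ^{n+1} lies in the boundary if and only if not all of its coordinate maps are surjections. -/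
/-!
STATEMENT 0: For `n ≥ 1` and a multi-index `([i_n],...,[i_0])`, the boundary
`∂Δ[i_n,...,i_0]` of the representable presheaf on `Δ^{n+1}` — i.e. the maximal
subpresheaf not containing the identity — consists exactly of those maps
`([j_n],...,[j_0]) → ([i_n],...,[i_0])` for which not all coordinate maps are
surjections.  (This is the decomposition statement in its equivalent elementwise
form, as stated in the paper.)

We encode "`f` lies in the maximal subpresheaf missing the identity" as
"`f` lies in *some* subpresheaf missing the identity" (the maximal one being the
union of all of these).
-/

open CategoryTheory Opposite

/-- A subpresheaf of a presheaf of types. -/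
structure MultiSub {C : Type*} [Category C] (F : Cᵒᵖ ⥤ Type*) where
  carrier : ∀ c : Cᵒᵖ, Set (F.obj c)
  map_mem : ∀ {c c' : Cᵒᵖ} (g : c ⟶ c') {x : F.obj c}, x ∈ carrier c → F.map g x ∈ carrier c'

/-! A subpresheaf of `yoneda.obj X` containing a split epimorphism `f` with section `s` also
contains `s ≫ f = 𝟙 X`, while the non-split epimorphisms onto `X` form a subpresheaf missing `𝟙 X`.
So the boundary consists exactly of the non-split epimorphisms; in `Δ^{n+1}` a map is split epi
iff each coordinate is, and in `Δ` the split epimorphisms are the surjections. -/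

namespace CategoryTheory

variable {C : Type*} [Category C]

theorem IsSplitEpi.of_comp {X Y Z : C} {g : X ⟶ Y} {f : Y ⟶ Z} (_ : IsSplitEpi (g ≫ f)) :
    IsSplitEpi f :=
  IsSplitEpi.mk' ⟨section_ (g ≫ f) ≫ g, by simp⟩

def nonSplitEpiSub (X : C) : MultiSub (yoneda.obj X) where
  carrier _ f := ¬ IsSplitEpi f
  map_mem g _ hf hgf := hf (IsSplitEpi.of_comp (g := g.unop) hgf)

theorem exists_multiSub_yoneda_iff_not_isSplitEpi {X Y : C} (f : Y ⟶ X) :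
    (∃ G : MultiSub (yoneda.obj X), 𝟙 X ∉ G.carrier (op X) ∧ f ∈ G.carrier (op Y)) ↔
      ¬ IsSplitEpi f := by
  constructor
  · rintro ⟨G, hid, hf⟩ _
    have hsection := G.map_mem (op (section_ f)) hf
    exact hid (by simpa using hsection)
  · intro hf
    exact ⟨nonSplitEpiSub X, fun hid => hid inferInstance, hf⟩

theorem isSplitEpi_pi_iff {ι : Type*} {D : ι → Type*} [∀ i, Category (D i)] {X Y : ∀ i, D i}
    (f : X ⟶ Y) : IsSplitEpi f ↔ ∀ i, IsSplitEpi (f i) :=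
  ⟨fun _ i => inferInstanceAs (IsSplitEpi ((Pi.eval D i).map f)),
    fun _ => IsSplitEpi.mk' ⟨fun i => section_ (f i), funext fun i => IsSplitEpi.id (f i)⟩⟩

end CategoryTheory

theorem SimplexCategory.isSplitEpi_iff_surjective {m n : SimplexCategory} (f : m ⟶ n) :
    IsSplitEpi f ↔ Function.Surjective f.toOrderHom :=
  ⟨fun _ => epi_iff_surjective.1 inferInstance,
    fun hf => haveI := epi_iff_surjective.2 hf; isSplitEpi_of_epi f⟩

theorem statement0_general (n : ℕ) (I : Fin (n + 1) → SimplexCategory)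
    (J : Fin (n + 1) → SimplexCategory) (f : J ⟶ I) :
    (∃ G : MultiSub (yoneda.obj I),
        𝟙 I ∉ G.carrier (op I) ∧ f ∈ G.carrier (op J)) ↔
      ¬ ∀ h : Fin (n + 1), Function.Surjective (f h).toOrderHom := by
  simp only [exists_multiSub_yoneda_iff_not_isSplitEpi, isSplitEpi_pi_iff,
    SimplexCategory.isSplitEpi_iff_surjective]

theorem statement0 (n : ℕ) (hn : 1 ≤ n) (I : Fin (n + 1) → SimplexCategory)
    (J : Fin (n + 1) → SimplexCategory) (f : J ⟶ I) :
    (∃ G : MultiSub (yoneda.obj I),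
        𝟙 I ∉ G.carrier (op I) ∧ f ∈ G.carrier (op J)) ↔
      ¬ ∀ h : Fin (n + 1), Function.Surjective (f h).toOrderHom :=
  statement0_general n I J f
end

section
/- There is a natural isomorphism of functors Top → Cat between h_1 ∘ Sing_sS and the fundamental groupoid functor Π_1. Concretely, for a topological space X, the category with objects the points of X, morphisms x → y the path components of the space of paths from x to y (with endpoints fixed), and composition induced by the Segal structure of Sing_sS(X), is naturally isomorphic to the fundamental groupoid of X. -/
/-!
STATEMENT 10: There is a natural isomorphism `h₁ ∘ Sing_sS ≅ Π₁` between the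
homotopy category of the Segal space `Sing_sS(X)` and the fundamental groupoid
of `X`, natural in the topological space `X`.  Concretely: objects of
`h₁(Sing_sS X)` correspond bijectively to points of `X`; hom-sets (path
components of the mapping spaces, i.e. `Quot` of the edge-homotopy relation)
correspond bijectively to endpoint-preserving homotopy classes of paths; and
these bijections send Segal composites to path composition, degenerate edges to
identities, and are natural with respect to continuous maps.
-/

open CategoryTheory Limits Opposite Simplicial

noncomputable section

/-! ### Weak homotopy equivalences of simplicial sets -/

/-- The unique map to the point `Δ[0]`. -/
def toPoint (X : SSet) : X ⟶ Δ[0] where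
  app m := ↾fun _ => ULift.up (SimplexCategory.Hom.mk ⟨fun _ => 0, monotone_const⟩)
  naturality := by
    intro a b g
    ext x
    apply congrArg ULift.up
    apply SimplexCategory.Hom.ext
    apply OrderHom.ext
    funext v
    apply Subsingleton.elim (α := Fin 1)

/-- The two endpoints `Δ[0] ⟶ Δ[1]`. -/
def pt0 : Δ[0] ⟶ Δ[1] := SSet.stdSimplex.map (SimplexCategory.δ 1)
def pt1 : Δ[0] ⟶ Δ[1] := SSet.stdSimplex.map (SimplexCategory.δ 0)

/-- Simplicial homotopy of maps `X ⟶ Z`, via the cylinder `X ⨯ Δ[1]`. -/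
def SHtpy {X Z : SSet} (f g : X ⟶ Z) : Prop :=
  ∃ H : (X ⨯ Δ[1] : SSet) ⟶ Z,
    prod.lift (𝟙 X) (toPoint X ≫ pt0) ≫ H = f ∧
    prod.lift (𝟙 X) (toPoint X ≫ pt1) ≫ H = g

/-- The horn-filling condition defining Kan complexes in the older Mathlib
(`SSet.KanComplex`), for every `n : ℕ` (including `n = 0`). -/
def KanComplexOld (S : SSet) : Prop :=
  ∀ ⦃n : ℕ⦄ ⦃i : Fin (n + 1)⦄ (σ₀ : (Λ[n, i] : SSet) ⟶ S),
    ∃ σ : Δ[n] ⟶ S, σ₀ = Λ[n, i].ι ≫ σ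

/-- A map of simplicial sets is a weak homotopy equivalence iff for every Kan
complex `Z` it induces a bijection on homotopy classes of maps into `Z`. -/
def IsWeakEquiv {X Y : SSet} (f : X ⟶ Y) : Prop :=
  ∀ Z : SSet, KanComplexOld Z →
    (∀ u : X ⟶ Z, ∃ v : Y ⟶ Z, SHtpy (f ≫ v) u) ∧
    (∀ v w : Y ⟶ Z, SHtpy (f ≫ v) (f ≫ w) → SHtpy v w)

/-- A trivial fibration of simplicial sets: right lifting property against all
(levelwise) monomorphisms. -/
def IsTrivialFibration {X Y : SSet} (p : X ⟶ Y) : Prop :=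
  ∀ ⦃A B : SSet⦄ (j : A ⟶ B), (∀ m, Function.Injective (j.app m)) → HasLiftingProperty j p

/-! ### Simplicial spaces and the injective (Reedy) model structure -/

/-- Simplicial spaces. -/
abbrev SimpSpace := SimplexCategoryᵒᵖ ⥤ SSet

/-- Levelwise cofibrations (monomorphisms) of simplicial spaces. -/
def LwMono {X Y : SimpSpace} (f : X ⟶ Y) : Prop :=
  ∀ d m, Function.Injective ((f.app d).app m)

/-- Levelwise weak equivalences of simplicial spaces. -/
def LwWeq {X Y : SimpSpace} (f : X ⟶ Y) : Prop :=
  ∀ d, IsWeakEquiv (f.app d)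

/-- Reedy (injective) fibrations of simplicial spaces: right lifting property
against all trivial cofibrations, i.e. levelwise monos which are levelwise weak
equivalences. -/
def ReedyFibration {X Y : SimpSpace} (f : X ⟶ Y) : Prop :=
  ∀ ⦃U V : SimpSpace⦄ (j : U ⟶ V), LwMono j → LwWeq j → HasLiftingProperty j f

/-- Trivial Reedy fibrations: right lifting property against all cofibrations. -/
def TrivialReedyFibration {X Y : SimpSpace} (f : X ⟶ Y) : Prop :=
  ∀ ⦃U V : SimpSpace⦄ (j : U ⟶ V), LwMono j → HasLiftingProperty j f

/-- Reedy fibrant simplicial spaces. -/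
def ReedyFibrant (X : SimpSpace) : Prop :=
  ReedyFibration (terminal.from X)

/-! ### Segal spaces -/

/-- Source vertex map `X₁ ⟶ X₀` (restriction along `⟨0⟩ = δ¹ : [0] → [1]`). -/
def srcM (X : SimpSpace) : X.obj (op ⦋1⦌) ⟶ X.obj (op ⦋0⦌) :=
  X.map (SimplexCategory.δ 1).op

/-- Target vertex map `X₁ ⟶ X₀` (restriction along `⟨1⟩ = δ⁰ : [0] → [1]`). -/
def tgtM (X : SimpSpace) : X.obj (op ⦋1⦌) ⟶ X.obj (op ⦋0⦌) :=
  X.map (SimplexCategory.δ 0).op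

/-- The `i`-th edge `[1] ⟶ [n]`, `j ↦ i + j`. -/
def edgeHom (n : ℕ) (i : Fin n) : (⦋1⦌ : SimplexCategory) ⟶ ⦋n⦌ :=
  SimplexCategory.mkHom
    ⟨fun j => ⟨i.1 + j.1, by have hi := i.2; have hj := j.2; omega⟩, by
      intro a b hab
      have : a.1 ≤ b.1 := hab
      simp only [Fin.mk_le_mk]
      omega⟩

/-- The (iterated homotopy) fiber product `X₁ ×_{X₀} ⋯ ×_{X₀} X₁` of `n` copies
of `X₁`, the codomain of the `n`-th Segal map. -/
def SpineLim (X : SimpSpace) (n : ℕ) : SSet where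
  obj m :=
    { f : Fin n → (X.obj (op ⦋1⦌)).obj m //
      ∀ (i : ℕ) (h1 : i + 1 < n),
        (tgtM X).app m (f ⟨i, by omega⟩) = (srcM X).app m (f ⟨i + 1, h1⟩) }
  map {m m'} g := ↾fun p =>
    ⟨fun i => (X.obj (op ⦋1⦌)).map g (p.1 i), by
      intro i h1
      have h := p.2 i h1
      have ht := ConcreteCategory.congr_hom ((tgtM X).naturality g) (p.1 ⟨i, by omega⟩)
      have hs := ConcreteCategory.congr_hom ((srcM X).naturality g) (p.1 ⟨i + 1, h1⟩)
      simp only [types_comp_apply] at ht hs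
      dsimp only
      rw [ht, h, ← hs]⟩
  map_id := by
    intro m
    refine ConcreteCategory.ext_apply fun p => ?_
    apply Subtype.ext
    funext i
    simp
  map_comp := by
    intro m m' m'' g h
    refine ConcreteCategory.ext_apply fun p => ?_
    apply Subtype.ext
    funext i
    simp

/-- The `n`-th Segal map `X_n ⟶ X₁ ×_{X₀} ⋯ ×_{X₀} X₁`. -/
def segalMap (X : SimpSpace) (n : ℕ) : X.obj (op ⦋n⦌) ⟶ SpineLim X n where
  app m := ↾fun x =>
    ⟨fun i => (X.map (edgeHom n i).op).app m x, by
      intro i h1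
      have key : (SimplexCategory.δ 0 ≫ edgeHom n ⟨i, by omega⟩ : (⦋0⦌ : SimplexCategory) ⟶ ⦋n⦌) =
          SimplexCategory.δ 1 ≫ edgeHom n ⟨i + 1, h1⟩ := by
        apply SimplexCategory.Hom.ext
        apply OrderHom.ext
        funext v
        have hv : v = 0 := Subsingleton.elim (α := Fin 1) v 0
        subst hv
        apply Fin.ext
        simp [edgeHom, SimplexCategory.δ, Fin.succAbove]
        rfl
      have e1 : (tgtM X).app m ((X.map (edgeHom n ⟨i, by omega⟩).op).app m x) =
          (X.map (SimplexCategory.δ 0 ≫ edgeHom n ⟨i, by omega⟩).op).app m x := by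
        rw [op_comp, X.map_comp]; rfl
      have e2 : (srcM X).app m ((X.map (edgeHom n ⟨i + 1, h1⟩).op).app m x) =
          (X.map (SimplexCategory.δ 1 ≫ edgeHom n ⟨i + 1, h1⟩).op).app m x := by
        rw [op_comp, X.map_comp]; rfl
      rw [e1, e2, key]⟩
  naturality := by
    intro m m' g
    refine ConcreteCategory.ext_apply fun x => ?_
    apply Subtype.ext
    funext i
    exact ConcreteCategory.congr_hom ((X.map (edgeHom n i).op).naturality g) x

/-- A Segal space: a Reedy fibrant simplicial space whose Segal maps are weak
equivalences. -/
def IsSegalSpace (X : SimpSpace) : Prop :=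
  ReedyFibrant X ∧ ∀ n, 2 ≤ n → IsWeakEquiv (segalMap X n)


/-! ### Mapping spaces (fibers), path components, composites -/

/-- The set of objects (vertices) of a simplicial space. -/
abbrev Vtx (X : SimpSpace) := (X.obj (op ⦋0⦌)).obj (op ⦋0⦌)

/-- The set of `1`-morphism vertices of a simplicial space. -/
abbrev EdgeVtx (X : SimpSpace) := (X.obj (op ⦋1⦌)).obj (op ⦋0⦌)

/-- Any two maps into `[0]` agree. -/
lemma toZeroUnique {a : SimplexCategory} (f g : a ⟶ ⦋0⦌) : f = g := by
  apply SimplexCategory.Hom.ext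
  apply OrderHom.ext
  funext v
  exact Subsingleton.elim (α := Fin 1) _ _

/-- The unique map `m ⟶ [0]`. -/
def toZero (a : SimplexCategory) : a ⟶ ⦋0⦌ :=
  SimplexCategory.Hom.mk ⟨fun _ => 0, monotone_const⟩

/-- The constant extension of a vertex `x ∈ X₀` to an arbitrary level `m`. -/
def cstAt (X : SimpSpace) (x : Vtx X) (m : SimplexCategoryᵒᵖ) : (X.obj (op ⦋0⦌)).obj m :=
  (X.obj (op ⦋0⦌)).map (toZero m.unop).op x

lemma cst_natural (X : SimpSpace) (x : Vtx X) {m m' : SimplexCategoryᵒᵖ} (g : m ⟶ m') :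
    (X.obj (op ⦋0⦌)).map g (cstAt X x m) = cstAt X x m' := by
  dsimp [cstAt]
  rw [← FunctorToTypes.map_comp_apply]
  have he : (toZero m.unop).op ≫ g = (toZero m'.unop).op := by
    rw [show (toZero m.unop).op ≫ g = (g.unop ≫ toZero m.unop).op from rfl]
    exact congrArg Quiver.Hom.op (toZeroUnique _ _)
  rw [he]

/-- Source object of a `1`-morphism vertex. -/
def vsrc (X : SimpSpace) (f : EdgeVtx X) : Vtx X := (srcM X).app (op ⦋0⦌) f

/-- Target object of a `1`-morphism vertex. -/
def vtgt (X : SimpSpace) (f : EdgeVtx X) : Vtx X := (tgtM X).app (op ⦋0⦌) f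

/-- The mapping space `X(x,y)`: the fiber of `(source, target) : X₁ → X₀ × X₀`
over the pair of vertices `(x, y)`. -/
def mapFiber (X : SimpSpace) (x y : Vtx X) : SSet where
  obj m :=
    { a : (X.obj (op ⦋1⦌)).obj m //
      (srcM X).app m a = cstAt X x m ∧ (tgtM X).app m a = cstAt X y m }
  map {m m'} g := ↾fun p =>
    ⟨(X.obj (op ⦋1⦌)).map g p.1, by
      have hs := ConcreteCategory.congr_hom ((srcM X).naturality g) p.1
      have ht := ConcreteCategory.congr_hom ((tgtM X).naturality g) p.1
      simp only [types_comp_apply] at hs ht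
      constructor
      · rw [hs, p.2.1, cst_natural]
      · rw [ht, p.2.2, cst_natural]⟩
  map_id := by
    intro m
    refine ConcreteCategory.ext_apply fun p => ?_
    apply Subtype.ext
    simp
  map_comp := by
    intro m m' m'' g h
    refine ConcreteCategory.ext_apply fun p => ?_
    apply Subtype.ext
    simp

/-- Two parallel `1`-morphism vertices (from `x` to `y`) are homotopic if there
is an edge in the mapping space `X(x,y)` connecting them: an element of
`X₁` at inner level `[1]` whose inner faces are `f`, `f'` and which is constant
at `x`, `y` on source and target. -/
def PathRel (X : SimpSpace) (x y : Vtx X) (f f' : EdgeVtx X) : Prop :=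
  ∃ e : (X.obj (op ⦋1⦌)).obj (op ⦋1⦌),
    (X.obj (op ⦋1⦌)).map (SimplexCategory.δ 1).op e = f ∧
    (X.obj (op ⦋1⦌)).map (SimplexCategory.δ 0).op e = f' ∧
    (srcM X).app (op ⦋1⦌) e = cstAt X x (op ⦋1⦌) ∧
    (tgtM X).app (op ⦋1⦌) e = cstAt X y (op ⦋1⦌)

/-- `h` is a composite of `f` followed by `g`, as witnessed by a `2`-simplex
with faces `d₂ = f`, `d₀ = g`, `d₁ = h`. -/
def IsComposite (X : SimpSpace) (f g h : EdgeVtx X) : Prop :=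
  ∃ σ : (X.obj (op ⦋2⦌)).obj (op ⦋0⦌),
    (X.map (SimplexCategory.δ 2).op).app (op ⦋0⦌) σ = f ∧
    (X.map (SimplexCategory.δ 0).op).app (op ⦋0⦌) σ = g ∧
    (X.map (SimplexCategory.δ 1).op).app (op ⦋0⦌) σ = h

/-- The degenerate (identity) edge at a vertex. -/
def idEdge (X : SimpSpace) (x : Vtx X) : EdgeVtx X :=
  (X.map (SimplexCategory.σ 0).op).app (op ⦋0⦌) x

/-- Precomposition `X^{Δ_t[n]} → X^{Δ_t[n']}` along the topological cosimplicial
structure maps. -/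
def preMap (X : TopCat) {n n' : SimplexCategoryᵒᵖ} (g : n ⟶ n') :
    TopCat.of C(SimplexCategory.toTop.{0}.obj n.unop, X) ⟶
      TopCat.of C(SimplexCategory.toTop.{0}.obj n'.unop, X) :=
  TopCat.ofHom ⟨fun (φ : C(SimplexCategory.toTop.{0}.obj n.unop, X)) => φ.comp (SimplexCategory.toTop.{0}.map g.unop).hom,
    ContinuousMap.continuous_precomp _⟩

lemma preMap_id (X : TopCat) (n : SimplexCategoryᵒᵖ) :
    preMap X (𝟙 n) = 𝟙 (TopCat.of C(SimplexCategory.toTop.{0}.obj n.unop, X)) :=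
  TopCat.ext fun φ => by
    change φ.comp (SimplexCategory.toTop.{0}.map (𝟙 n.unop)).hom = φ
    rw [CategoryTheory.Functor.map_id]
    rfl

lemma preMap_comp (X : TopCat) {n n' n'' : SimplexCategoryᵒᵖ} (g : n ⟶ n') (h : n' ⟶ n'') :
    preMap X (g ≫ h) = preMap X g ≫ preMap X h :=
  TopCat.ext fun φ => by
    change φ.comp (SimplexCategory.toTop.{0}.map (h.unop ≫ g.unop)).hom = _
    rw [CategoryTheory.Functor.map_comp]
    rfl

/-- The simplicial space `Sing_sS(X)` with `Sing_sS(X)_n = Sing(X^{Δ_t[n]})`. -/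
def SingSS (X : TopCat) : SimpSpace where
  obj n := TopCat.toSSet.obj (TopCat.of C(SimplexCategory.toTop.{0}.obj n.unop, X))
  map {n n'} g := TopCat.toSSet.map (preMap X g)
  map_id := by
    intro n
    show TopCat.toSSet.map (preMap X (𝟙 n)) = _
    rw [preMap_id, TopCat.toSSet.map_id]
  map_comp := by
    intro n n' n'' g h
    show TopCat.toSSet.map (preMap X (g ≫ h)) = _
    rw [preMap_comp, TopCat.toSSet.map_comp]

/-- Postcomposition with `F : X ⟶ Y` on mapping spaces. -/
def postMap (X Y : TopCat) (F : X ⟶ Y) (n : SimplexCategoryᵒᵖ) :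
    TopCat.of C(SimplexCategory.toTop.{0}.obj n.unop, X) ⟶
      TopCat.of C(SimplexCategory.toTop.{0}.obj n.unop, Y) :=
  TopCat.ofHom ⟨fun φ => ContinuousMap.comp F.hom φ, ContinuousMap.continuous_postcomp _⟩

/-- The functorial action of `Sing_sS` on a continuous map. -/
def SingSSmap {X Y : TopCat} (F : X ⟶ Y) : SingSS X ⟶ SingSS Y where
  app n := TopCat.toSSet.map (postMap X Y F n)
  naturality := by
    intro n n' g
    show TopCat.toSSet.map (preMap X g) ≫ TopCat.toSSet.map (postMap X Y F n') =
      TopCat.toSSet.map (postMap X Y F n) ≫ TopCat.toSSet.map (preMap Y g)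
    rw [← TopCat.toSSet.map_comp, ← TopCat.toSSet.map_comp]
    congr 1

/-- The vertex of `Sing_sS(X)` corresponding to a point of `X`. -/
def pointVtx (X : TopCat) (x : X) : Vtx (SingSS X) :=
  ULift.up (TopCat.ofHom (⟨fun _ => ⟨fun _ => x, continuous_const⟩, continuous_const⟩ :
    C(SimplexCategory.toTop.{0}.obj (SimplexCategory.mk 0),
      C(SimplexCategory.toTop.{0}.obj (SimplexCategory.mk 0), X))))

/-- The set of `1`-morphisms from `x` to `y` in `Sing_sS(X)` (vertices of the
mapping space). -/
def PathCarrier (X : TopCat) (x y : X) :=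
  { p : EdgeVtx (SingSS X) //
    vsrc (SingSS X) p = pointVtx X x ∧ vtgt (SingSS X) p = pointVtx X y }

/-- Pushing forward a `1`-morphism vertex along a continuous map. -/
def pushEdge {X Y : TopCat} (F : X ⟶ Y) (p : EdgeVtx (SingSS X)) : EdgeVtx (SingSS Y) :=
  ((SingSSmap F).app (op ⦋1⦌)).app (op ⦋0⦌) p


/-!
In `Sing_sS X` an element of bidegree `(n, m)` is a continuous map `Δᵐ → C(Δⁿ, X)`, so everything
can be computed on the nose: an object is a point of `X`, a morphism `x → y` is a map `Δ¹ → X`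
sending the two vertices to `x` and `y` (a path, once `Δ¹` is identified with the unit interval),
and an edge of the mapping space `X(x, y)` is exactly a homotopy of such paths rel endpoints.
A Segal composite is witnessed by a singular simplex `Δ² → X`; as `Δ²` is simply connected, its
long edge is homotopic to the concatenation of the two short ones.
-/

namespace SimplexCategory

def toTopVertex {n : ℕ} (k : Fin (n + 1)) : toTop.{0}.obj ⦋n⦌ := ULift.up (stdSimplex.vertex k)

@[simp]
lemma toTop_map_toTopVertex {n m : ℕ} (g : ⦋n⦌ ⟶ ⦋m⦌) (k : Fin (n + 1)) :
    toTop.{0}.map g (toTopVertex k) = toTopVertex (g.toOrderHom k) :=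
  congrArg ULift.up (stdSimplex.map_vertex _ k)

lemma toTop_map_apply_of_zero {n : ℕ} (g : ⦋0⦌ ⟶ ⦋n⦌) (s : toTop.{0}.obj ⦋0⦌) :
    toTop.{0}.map g s = toTopVertex (g.toOrderHom 0) := by
  rw [Subsingleton.elim s (toTopVertex 0), toTop_map_toTopVertex]

def toTopOneHomeo : toTop.{0}.obj ⦋1⦌ ≃ₜ unitInterval :=
  Homeomorph.ulift.trans stdSimplexHomeomorphUnitInterval

@[simp]
lemma toTopOneHomeo_vertex_zero : toTopOneHomeo (toTopVertex 0) = 0 := rfl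

@[simp]
lemma toTopOneHomeo_vertex_one : toTopOneHomeo (toTopVertex 1) = 1 := rfl

@[simp]
lemma toTopOneHomeo_symm_zero : toTopOneHomeo.symm 0 = toTopVertex 0 := by
  rw [Homeomorph.symm_apply_eq, toTopOneHomeo_vertex_zero]

@[simp]
lemma toTopOneHomeo_symm_one : toTopOneHomeo.symm 1 = toTopVertex 1 := by
  rw [Homeomorph.symm_apply_eq, toTopOneHomeo_vertex_one]

instance (n : ℕ) : CompactSpace (toTop.{0}.obj ⦋n⦌) :=
  (Homeomorph.ulift (X := stdSimplex ℝ (Fin (n + 1)))).symm.compactSpace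

instance (n : ℕ) : T2Space (toTop.{0}.obj ⦋n⦌) :=
  (Homeomorph.ulift (X := stdSimplex ℝ (Fin (n + 1)))).symm.t2Space

instance (n : ℕ) : ContractibleSpace (toTop.{0}.obj ⦋n⦌) :=
  haveI := (convex_stdSimplex ℝ (Fin (n + 1))).contractibleSpace ⟨_, single_mem_stdSimplex ℝ 0⟩
  (Homeomorph.ulift (X := stdSimplex ℝ (Fin (n + 1)))).contractibleSpace

end SimplexCategory

section EdgePath

open SimplexCategory

variable {Y : Type*} [TopologicalSpace Y]

def edgePath (f : C(toTop.{0}.obj ⦋1⦌, Y)) {a b : Y} (h₀ : f (toTopVertex 0) = a)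
    (h₁ : f (toTopVertex 1) = b) : Path a b where
  toContinuousMap := f.comp toTopOneHomeo.symm
  source' := by simpa using h₀
  target' := by simpa using h₁

@[simp]
lemma edgePath_apply (f : C(toTop.{0}.obj ⦋1⦌, Y)) {a b : Y} (h₀ : f (toTopVertex 0) = a)
    (h₁ : f (toTopVertex 1) = b) (t : unitInterval) :
    edgePath f h₀ h₁ t = f (toTopOneHomeo.symm t) := rfl

lemma edgePath_homotopic_iff {a b : Y} (f g : C(toTop.{0}.obj ⦋1⦌, Y))
    (hf₀ : f (toTopVertex 0) = a) (hf₁ : f (toTopVertex 1) = b)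
    (hg₀ : g (toTopVertex 0) = a) (hg₁ : g (toTopVertex 1) = b) :
    (edgePath f hf₀ hf₁).Homotopic (edgePath g hg₀ hg₁) ↔
      ∃ E : C(toTop.{0}.obj ⦋1⦌, C(toTop.{0}.obj ⦋1⦌, Y)),
        E (toTopVertex 0) = f ∧ E (toTopVertex 1) = g ∧
          ∀ s, E s (toTopVertex 0) = a ∧ E s (toTopVertex 1) = b := by
  constructor
  · rintro ⟨H⟩
    let φ : C(toTop.{0}.obj ⦋1⦌, unitInterval) := toTopOneHomeo
    refine ⟨(H.toContinuousMap.comp (φ.prodMap φ)).curry, ?_, ?_, fun s => ⟨?_, ?_⟩⟩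
    · ext u
      simp [φ]
    · ext u
      simp [φ]
    · exact H.source _
    · exact H.target _
  · rintro ⟨E, hE₀, hE₁, hE⟩
    let ψ : C(unitInterval, toTop.{0}.obj ⦋1⦌) := toTopOneHomeo.symm
    refine ⟨⟨⟨E.uncurry.comp (ψ.prodMap ψ), fun t => ?_, fun t => ?_⟩, ?_⟩⟩
    · simp [ψ, hE₀]
    · simp [ψ, hE₁]
    · rintro t u (rfl | rfl) <;> simp [ψ, hE]

def simplexEdge {n : ℕ} (g : ⦋1⦌ ⟶ ⦋n⦌) :
    Path (toTopVertex (g.toOrderHom 0)) (toTopVertex (g.toOrderHom 1)) :=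
  edgePath (toTop.map g).hom (toTop_map_toTopVertex g 0) (toTop_map_toTopVertex g 1)

end EdgePath

namespace SingSS

open SimplexCategory

variable {X : TopCat}

def objEquiv (X : TopCat) (n m : SimplexCategory) :
    ((SingSS X).obj (op n)).obj (op m) ≃ C(toTop.{0}.obj m, C(toTop.{0}.obj n, X)) where
  toFun a := a.down.hom
  invFun f := ULift.up (TopCat.ofHom f)
  left_inv _ := rfl
  right_inv _ := rfl

lemma objEquiv_obj_map {n m m' : SimplexCategory} (g : m' ⟶ m)
    (a : ((SingSS X).obj (op n)).obj (op m)) :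
    objEquiv X n m' (((SingSS X).obj (op n)).map g.op a) =
      (objEquiv X n m a).comp (toTop.map g).hom := rfl

lemma objEquiv_map_app_apply {n n' m : SimplexCategory} (g : n' ⟶ n)
    (a : ((SingSS X).obj (op n)).obj (op m)) (s : toTop.{0}.obj m) :
    objEquiv X n' m (((SingSS X).map g.op).app (op m) a) s =
      (objEquiv X n m a s).comp (toTop.map g).hom := rfl

def objZeroEquiv (X : TopCat) (n : SimplexCategory) :
    ((SingSS X).obj (op n)).obj (op ⦋0⦌) ≃ C(toTop.{0}.obj n, X) :=
  (objEquiv X n ⦋0⦌).trans Homeomorph.continuousMapOfUnique.symm.toEquiv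

lemma objZeroEquiv_apply {n : SimplexCategory} (a : ((SingSS X).obj (op n)).obj (op ⦋0⦌)) :
    objZeroEquiv X n a = objEquiv X n ⦋0⦌ a default := rfl

lemma objZeroEquiv_map_app {n n' : SimplexCategory} (g : n' ⟶ n)
    (a : ((SingSS X).obj (op n)).obj (op ⦋0⦌)) :
    objZeroEquiv X n' (((SingSS X).map g.op).app (op ⦋0⦌) a) =
      (objZeroEquiv X n a).comp (toTop.map g).hom := rfl

lemma objZeroEquiv_obj_map {n m : SimplexCategory} (g : ⦋0⦌ ⟶ m)
    (a : ((SingSS X).obj (op n)).obj (op m)) :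
    objZeroEquiv X n (((SingSS X).obj (op n)).map g.op a) =
      objEquiv X n m a (toTop.map g default) := rfl

def vtxEquiv (X : TopCat) : Vtx (SingSS X) ≃ X :=
  (objZeroEquiv X ⦋0⦌).trans Homeomorph.continuousMapOfUnique.symm.toEquiv

lemma coe_vtxEquiv_symm : ⇑(vtxEquiv X).symm = pointVtx X := rfl

lemma vtxEquiv_apply (v : Vtx (SingSS X)) : vtxEquiv X v = objZeroEquiv X ⦋0⦌ v default := rfl

lemma objEquiv_cstAt_apply (v : Vtx (SingSS X)) (m : SimplexCategory) (s : toTop.{0}.obj m)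
    (u : toTop.{0}.obj ⦋0⦌) :
    objEquiv X ⦋0⦌ m (cstAt (SingSS X) v (op m)) s u = vtxEquiv X v := by
  rw [cstAt, objEquiv_obj_map, vtxEquiv_apply, objZeroEquiv_apply, ContinuousMap.comp_apply,
    Subsingleton.elim u default, Subsingleton.elim (toTop.map _ s) default]

lemma vtxEquiv_vsrc (p : EdgeVtx (SingSS X)) :
    vtxEquiv X (vsrc (SingSS X) p) = objZeroEquiv X ⦋1⦌ p (toTopVertex 0) := by
  rw [vtxEquiv_apply, vsrc, srcM, objZeroEquiv_map_app, ContinuousMap.comp_apply,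
    toTop_map_apply_of_zero]
  rfl

lemma vtxEquiv_vtgt (p : EdgeVtx (SingSS X)) :
    vtxEquiv X (vtgt (SingSS X) p) = objZeroEquiv X ⦋1⦌ p (toTopVertex 1) := by
  rw [vtxEquiv_apply, vtgt, tgtM, objZeroEquiv_map_app, ContinuousMap.comp_apply,
    toTop_map_apply_of_zero]
  rfl

lemma vsrc_eq_pointVtx_iff {p : EdgeVtx (SingSS X)} {x : X} :
    vsrc (SingSS X) p = pointVtx X x ↔ objZeroEquiv X ⦋1⦌ p (toTopVertex 0) = x := by
  rw [← coe_vtxEquiv_symm, Equiv.eq_symm_apply, vtxEquiv_vsrc]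

lemma vtgt_eq_pointVtx_iff {p : EdgeVtx (SingSS X)} {y : X} :
    vtgt (SingSS X) p = pointVtx X y ↔ objZeroEquiv X ⦋1⦌ p (toTopVertex 1) = y := by
  rw [← coe_vtxEquiv_symm, Equiv.eq_symm_apply, vtxEquiv_vtgt]

def pathCarrierEquiv (X : TopCat) (x y : X) : PathCarrier X x y ≃ Path x y where
  toFun p := edgePath (objZeroEquiv X ⦋1⦌ p.1) (vsrc_eq_pointVtx_iff.1 p.2.1)
    (vtgt_eq_pointVtx_iff.1 p.2.2)
  invFun γ := ⟨(objZeroEquiv X ⦋1⦌).symm (γ.toContinuousMap.comp toTopOneHomeo),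
    vsrc_eq_pointVtx_iff.2 (by simp), vtgt_eq_pointVtx_iff.2 (by simp)⟩
  left_inv p := Subtype.ext <| (objZeroEquiv X ⦋1⦌).symm_apply_eq.2 <| by ext; simp
  right_inv γ := by ext; simp

lemma pathCarrierEquiv_apply {x y : X} (p : PathCarrier X x y) :
    pathCarrierEquiv X x y p = edgePath (objZeroEquiv X ⦋1⦌ p.1) (vsrc_eq_pointVtx_iff.1 p.2.1)
      (vtgt_eq_pointVtx_iff.1 p.2.2) := rfl

lemma eq_iff_objEquiv_apply_default {m : SimplexCategory}
    {a b : ((SingSS X).obj (op ⦋0⦌)).obj (op m)} :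
    a = b ↔ ∀ s, objEquiv X ⦋0⦌ m a s default = objEquiv X ⦋0⦌ m b s default := by
  refine ⟨fun h _ => h ▸ rfl, fun h => (objEquiv X ⦋0⦌ m).injective ?_⟩
  ext s u
  rw [Subsingleton.elim u default, h]

lemma pathRel_iff {x y : X} {p q : EdgeVtx (SingSS X)} :
    PathRel (SingSS X) (pointVtx X x) (pointVtx X y) p q ↔
      ∃ E : C(toTop.{0}.obj ⦋1⦌, C(toTop.{0}.obj ⦋1⦌, X)),
        E (toTopVertex 0) = objZeroEquiv X ⦋1⦌ p ∧ E (toTopVertex 1) = objZeroEquiv X ⦋1⦌ q ∧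
          ∀ s, E s (toTopVertex 0) = x ∧ E s (toTopVertex 1) = y := by
  refine (objEquiv X ⦋1⦌ ⦋1⦌).exists_congr fun e => ?_
  simp only [← (objZeroEquiv X ⦋1⦌).apply_eq_iff_eq, objZeroEquiv_obj_map,
    toTop_map_apply_of_zero, eq_iff_objEquiv_apply_default, srcM, tgtM, objEquiv_map_app_apply,
    ContinuousMap.comp_apply, objEquiv_cstAt_apply, ← coe_vtxEquiv_symm, Equiv.apply_symm_apply,
    forall_and]
  rfl

lemma pathRel_iff_homotopic {x y : X} {p q : PathCarrier X x y} :
    PathRel (SingSS X) (pointVtx X x) (pointVtx X y) p.1 q.1 ↔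
      (pathCarrierEquiv X x y p).Homotopic (pathCarrierEquiv X x y q) := by
  rw [pathRel_iff, pathCarrierEquiv_apply, pathCarrierEquiv_apply, edgePath_homotopic_iff]

def homEquiv (X : TopCat) (x y : X) :
    Quot (fun p q : PathCarrier X x y => PathRel (SingSS X) (pointVtx X x) (pointVtx X y) p.1 q.1) ≃
      (FundamentalGroupoid.mk x ⟶ FundamentalGroupoid.mk y) :=
  Quot.congr (pathCarrierEquiv X x y) fun _ _ => pathRel_iff_homotopic

lemma pathCarrierEquiv_homotopic_trans_of_isComposite {x y z : X} {p : PathCarrier X x y}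
    {q : PathCarrier X y z} {r : PathCarrier X x z} (h : IsComposite (SingSS X) p.1 q.1 r.1) :
    (pathCarrierEquiv X x z r).Homotopic
      ((pathCarrierEquiv X x y p).trans (pathCarrierEquiv X y z q)) := by
  obtain ⟨σ, hp, hq, hr⟩ := h
  set s := objZeroEquiv X ⦋2⦌ σ
  have hps : objZeroEquiv X ⦋1⦌ p.1 = s.comp (toTop.map (δ 2)).hom := hp ▸ objZeroEquiv_map_app _ σ
  have hqs : objZeroEquiv X ⦋1⦌ q.1 = s.comp (toTop.map (δ 0)).hom := hq ▸ objZeroEquiv_map_app _ σ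
  have hrs : objZeroEquiv X ⦋1⦌ r.1 = s.comp (toTop.map (δ 1)).hom := hr ▸ objZeroEquiv_map_app _ σ
  have hx : s (toTopVertex 0) = x := by
    have h := vsrc_eq_pointVtx_iff.1 p.2.1
    rwa [hps, ContinuousMap.comp_apply, toTop_map_toTopVertex] at h
  have hy : s (toTopVertex 1) = y := by
    have h := vsrc_eq_pointVtx_iff.1 q.2.1
    rwa [hqs, ContinuousMap.comp_apply, toTop_map_toTopVertex] at h
  have hz : s (toTopVertex 2) = z := by
    have h := vtgt_eq_pointVtx_iff.1 q.2.2
    rwa [hqs, ContinuousMap.comp_apply, toTop_map_toTopVertex] at h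
  subst hx hy hz
  have hr' : pathCarrierEquiv X _ _ r = (simplexEdge (δ 1 : ⦋1⦌ ⟶ ⦋2⦌)).map s.continuous := by
    ext t
    exact DFunLike.congr_fun hrs _
  have hp' : pathCarrierEquiv X _ _ p = (simplexEdge (δ 2 : ⦋1⦌ ⟶ ⦋2⦌)).map s.continuous := by
    ext t
    exact DFunLike.congr_fun hps _
  have hq' : pathCarrierEquiv X _ _ q = (simplexEdge (δ 0 : ⦋1⦌ ⟶ ⦋2⦌)).map s.continuous := by
    ext t
    exact DFunLike.congr_fun hqs _
  have h := (SimplyConnectedSpace.paths_homotopic (simplexEdge (δ 1 : ⦋1⦌ ⟶ ⦋2⦌))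
    ((simplexEdge (δ 2 : ⦋1⦌ ⟶ ⦋2⦌)).trans (simplexEdge (δ 0 : ⦋1⦌ ⟶ ⦋2⦌)))).map s
  rw [hr', hp', hq']
  exact Path.map_trans _ _ s.continuous ▸ h

lemma pathCarrierEquiv_eq_refl_of_eq_idEdge {x : X} {w : PathCarrier X x x}
    (hw : w.1 = idEdge (SingSS X) (pointVtx X x)) : pathCarrierEquiv X x x w = Path.refl x := by
  ext t
  exact DFunLike.congr_fun (congrArg (objZeroEquiv X ⦋1⦌) hw) _

lemma pathCarrierEquiv_of_eq_pushEdge {Y : TopCat} (F : X ⟶ Y) {x y : X} {p : PathCarrier X x y}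
    {q : PathCarrier Y (F x) (F y)} (hq : q.1 = pushEdge F p.1) :
    pathCarrierEquiv Y (F x) (F y) q = (pathCarrierEquiv X x y p).map F.hom.continuous := by
  ext t
  exact DFunLike.congr_fun (congrArg (objZeroEquiv Y ⦋1⦌) hq) _

end SingSS

theorem statement10 :
    ∃ e : ∀ (X : TopCat) (x y : X),
        Quot (fun p q : PathCarrier X x y =>
          PathRel (SingSS X) (pointVtx X x) (pointVtx X y) p.1 q.1) →
        ((FundamentalGroupoid.mk x : FundamentalGroupoid X) ⟶ FundamentalGroupoid.mk y),
      -- hom-sets: `π₀` of the mapping spaces of `Sing_sS X` is in bijection with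
      -- homotopy classes of paths
      (∀ (X : TopCat) (x y : X), Function.Bijective (e X x y)) ∧
      -- objects: the points of `X` are the objects of `h₁(Sing_sS X)`
      (∀ X : TopCat, Function.Bijective (pointVtx X)) ∧
      -- composites are sent to composition of paths in `Π₁(X)`
      (∀ (X : TopCat) (x y z : X) (p : PathCarrier X x y) (q : PathCarrier X y z)
          (r : PathCarrier X x z),
        IsComposite (SingSS X) p.1 q.1 r.1 →
        e X x z (Quot.mk _ r) = e X x y (Quot.mk _ p) ≫ e X y z (Quot.mk _ q)) ∧
      -- degenerate edges are sent to identities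
      (∀ (X : TopCat) (x : X) (w : PathCarrier X x x),
        w.1 = idEdge (SingSS X) (pointVtx X x) →
        e X x x (Quot.mk _ w) = 𝟙 _) ∧
      -- naturality in `X`
      (∀ (X Y : TopCat) (F : X ⟶ Y) (x y : X) (p : PathCarrier X x y)
          (q : PathCarrier Y (F x) (F y)),
        q.1 = pushEdge F p.1 →
        e Y (F x) (F y) (Quot.mk _ q) =
          Path.Homotopic.Quotient.map (e X x y (Quot.mk _ p)) F.hom) := by
  refine ⟨fun X x y => SingSS.homEquiv X x y, fun X x y => (SingSS.homEquiv X x y).bijective,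
    fun X => (SingSS.vtxEquiv X).symm.bijective, ?_, ?_, ?_⟩
  · intro X x y z p q r h
    exact Quotient.sound (SingSS.pathCarrierEquiv_homotopic_trans_of_isComposite h)
  · intro X x w hw
    exact congrArg _ (SingSS.pathCarrierEquiv_eq_refl_of_eq_idEdge hw)
  · intro X Y F x y p q hq
    exact congrArg _ (SingSS.pathCarrierEquiv_of_eq_pushEdge F hq)

end
end

section
/- Define R_n : Δ_t[n] → Sp_t(n) ⊆ Δ_t[n] on barycentric coordinates by R_n(x_0,...,x_n) = ((i+1) − Σ_j j·x_j)·e_i + (Σ_j j·x_j − i)·e_{i+1} whenever i ≤ Σ_j j·x_j ≤ i+1. Then R_n is a continuous retraction of the topological spine Sp_t(n) = ⋃_{i=0}^{n-1} [e_i, e_{i+1}] ⊆ Δ_t[n]: R_n restricted to Sp_t(n) is the identity. In particular, on a point (1−t)e_i + t·e_{i+1} of the spine, Σ_j j·x_j = i + t and R_n((1−t)e_i + t·e_{i+1}) = (1−t)e_i + t·e_{i+1}. -/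
/-
Write `s = Σ_j j·x_j ∈ [0, n]`. The `j`-th coordinate of `R_n(x)` is the hat function
`max 0 (1 - |s - j|)` evaluated at `s`: on `[i, i+1]` it is exactly the defining formula, which
makes `R_n` well defined and continuous at once. A spine point `(1-t)e_i + t e_{i+1}` has
`s = i + t`, so `R_n` sends it back to itself.
-/

open Finset

/-- The topological `n`-simplex `Δ_t[n] ⊆ ℝ^{n+1}`. -/
def TopSimplex (n : ℕ) : Type :=
  {x : Fin (n + 1) → ℝ // (∀ i, 0 ≤ x i) ∧ ∑ i, x i = 1}

instance (n : ℕ) : TopologicalSpace (TopSimplex n) := by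
  unfold TopSimplex; infer_instance

/-- The `i`-th vertex `e_i` of the topological simplex. -/
def vertex (n : ℕ) (i : Fin (n + 1)) : TopSimplex n :=
  ⟨fun j => if j = i then 1 else 0, by
    constructor
    · intro j; dsimp only; split <;> norm_num
    · simp⟩

/-- The weighted sum `Σ_j j·x_j` of a point of the simplex. -/
def wsum {n : ℕ} (x : TopSimplex n) : ℝ :=
  ∑ j, (j.1 : ℝ) * x.1 j

/-- Membership in the topological spine `Sp_t(n) = ⋃_{i=0}^{n-1} [e_i, e_{i+1}]`. -/
def InSpine {n : ℕ} (p : TopSimplex n) : Prop :=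
  ∃ (i : Fin n) (t : ℝ), 0 ≤ t ∧ t ≤ 1 ∧
    p.1 = (1 - t) • (vertex n i.castSucc).1 + t • (vertex n i.succ).1

def tent (n : ℕ) (s : ℝ) : Fin (n + 1) → ℝ := fun j => max 0 (1 - |s - (j.1 : ℝ)|)

lemma continuous_tent (n : ℕ) : Continuous (tent n) :=
  continuous_pi fun _ =>
    continuous_const.max (continuous_const.sub (continuous_id.sub continuous_const).abs)

lemma tent_natCast_add {n : ℕ} (i : Fin n) {t : ℝ} (ht₀ : 0 ≤ t) (ht₁ : t ≤ 1) :
    tent n (i.1 + t) = (1 - t) • (vertex n i.castSucc).1 + t • (vertex n i.succ).1 := by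
  funext j
  simp only [tent, vertex, Pi.add_apply, Pi.smul_apply, smul_eq_mul, mul_ite, mul_one,
    mul_zero, Fin.ext_iff, Fin.val_castSucc, Fin.val_succ]
  rcases lt_trichotomy j.1 i.1 with h | h | h
  · have : (j.1 : ℝ) + 1 ≤ i.1 := by exact_mod_cast h
    rw [if_neg h.ne, if_neg (by omega), abs_of_pos (by linarith)]
    simp only [add_zero]
    exact max_eq_left (by linarith)
  · rw [h, if_pos rfl, if_neg (by omega), add_sub_cancel_left, abs_of_nonneg ht₀]
    simp [ht₁]
  · rcases (Nat.succ_le_of_lt h).eq_or_lt with h' | h'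
    · rw [← h', if_neg (by omega), if_pos rfl]
      push_cast
      rw [show (i.1 : ℝ) + t - (i.1 + 1) = -(1 - t) by ring, abs_neg,
        abs_of_nonneg (by linarith)]
      simp [ht₀]
    · have : (i.1 : ℝ) + 2 ≤ j.1 := by exact_mod_cast h'
      rw [if_neg h.ne', if_neg h'.ne', abs_of_neg (by linarith)]
      simp only [add_zero]
      exact max_eq_left (by linarith)

lemma tent_eq_of_le_of_le_add_one {n : ℕ} (i : Fin n) {s : ℝ} (h₀ : (i.1 : ℝ) ≤ s)
    (h₁ : s ≤ i.1 + 1) :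
    tent n s = ((i.1 + 1 : ℝ) - s) • (vertex n i.castSucc).1 +
      (s - (i.1 : ℝ)) • (vertex n i.succ).1 := by
  have h := tent_natCast_add i (t := s - i.1) (by linarith) (by linarith)
  rwa [add_sub_cancel, show (1 : ℝ) - (s - i.1) = i.1 + 1 - s by ring] at h

lemma exists_fin_le_le_add_one {n : ℕ} (hn : 0 < n) {s : ℝ} (h₀ : 0 ≤ s) (h₁ : s ≤ n) :
    ∃ i : Fin n, (i.1 : ℝ) ≤ s ∧ s ≤ i.1 + 1 := by
  rcases lt_or_ge ⌊s⌋₊ n with h | h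
  · exact ⟨⟨⌊s⌋₊, h⟩, Nat.floor_le h₀, (Nat.lt_floor_add_one s).le⟩
  · refine ⟨⟨n - 1, by omega⟩, ?_, ?_⟩ <;> push_cast [Nat.cast_sub hn]
    · have : (n : ℝ) ≤ ⌊s⌋₊ := by exact_mod_cast h
      linarith [Nat.floor_le h₀]
    · linarith

lemma segment_mem_topSimplex {n : ℕ} (i : Fin n) {t : ℝ} (ht₀ : 0 ≤ t) (ht₁ : t ≤ 1) :
    let p := (1 - t) • (vertex n i.castSucc).1 + t • (vertex n i.succ).1
    (∀ j, 0 ≤ p j) ∧ ∑ j, p j = 1 := by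
  refine ⟨fun j => ?_, ?_⟩
  · have := (vertex n i.castSucc).2.1 j
    have := (vertex n i.succ).2.1 j
    simp only [Pi.add_apply, Pi.smul_apply, smul_eq_mul]
    positivity
  · simp only [Pi.add_apply, Pi.smul_apply, smul_eq_mul, sum_add_distrib, ← mul_sum,
      (vertex n i.castSucc).2.2, (vertex n i.succ).2.2]
    ring

lemma wsum_mem_Icc {n : ℕ} (x : TopSimplex n) : 0 ≤ wsum x ∧ wsum x ≤ n := by
  refine ⟨sum_nonneg fun j _ => mul_nonneg j.1.cast_nonneg (x.2.1 j), ?_⟩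
  calc wsum x ≤ ∑ j, (n : ℝ) * x.1 j :=
        sum_le_sum fun j _ => mul_le_mul_of_nonneg_right
          (by exact_mod_cast Nat.lt_succ_iff.mp j.2) (x.2.1 j)
    _ = n := by rw [← mul_sum, x.2.2, mul_one]

lemma continuous_wsum (n : ℕ) : Continuous (wsum : TopSimplex n → ℝ) :=
  continuous_finsetSum _ fun j _ =>
    continuous_const.mul ((continuous_apply j).comp continuous_subtype_val)

lemma wsum_of_eq_segment {n : ℕ} (i : Fin n) (t : ℝ) (p : TopSimplex n)
    (hp : p.1 = (1 - t) • (vertex n i.castSucc).1 + t • (vertex n i.succ).1) :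
    wsum p = i.1 + t := by
  simp only [wsum, hp, vertex, Pi.add_apply, Pi.smul_apply, smul_eq_mul, mul_ite, mul_one,
    mul_zero, mul_add, sum_add_distrib, sum_ite_eq', mem_univ, if_true, Fin.val_castSucc,
    Fin.val_succ]
  push_cast
  ring

lemma tent_wsum_mem_topSimplex {n : ℕ} (hn : 0 < n) (x : TopSimplex n) :
    (∀ j, 0 ≤ tent n (wsum x) j) ∧ ∑ j, tent n (wsum x) j = 1 := by
  obtain ⟨i, h₀, h₁⟩ := exists_fin_le_le_add_one hn (wsum_mem_Icc x).1 (wsum_mem_Icc x).2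
  have h := tent_natCast_add i (t := wsum x - i.1) (by linarith) (by linarith)
  rw [add_sub_cancel] at h
  exact h ▸ segment_mem_topSimplex i (by linarith) (by linarith)

def spineRetraction (n : ℕ) (hn : 0 < n) : C(TopSimplex n, TopSimplex n) where
  toFun x := ⟨tent n (wsum x), tent_wsum_mem_topSimplex hn x⟩
  continuous_toFun := ((continuous_tent n).comp (continuous_wsum n)).subtype_mk _

lemma spineRetraction_apply {n : ℕ} (hn : 0 < n) (x : TopSimplex n) :
    (spineRetraction n hn x).1 = tent n (wsum x) := rfl

lemma inSpine_spineRetraction {n : ℕ} (hn : 0 < n) (x : TopSimplex n) :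
    InSpine (spineRetraction n hn x) := by
  obtain ⟨i, h₀, h₁⟩ := exists_fin_le_le_add_one hn (wsum_mem_Icc x).1 (wsum_mem_Icc x).2
  refine ⟨i, wsum x - i.1, by linarith, by linarith, ?_⟩
  rw [spineRetraction_apply, ← tent_natCast_add i (by linarith) (by linarith), add_sub_cancel]

lemma spineRetraction_of_inSpine {n : ℕ} (hn : 0 < n) {p : TopSimplex n} (hp : InSpine p) :
    spineRetraction n hn p = p := by
  obtain ⟨i, t, ht₀, ht₁, hp⟩ := hp
  apply Subtype.ext
  rw [spineRetraction_apply, wsum_of_eq_segment i t p hp, tent_natCast_add i ht₀ ht₁, hp]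

theorem statement19 (n : ℕ) (hn : 0 < n) :
    ∃ R : C(TopSimplex n, TopSimplex n),
      -- the defining formula of `R_n` on each piece `i ≤ Σ_j j·x_j ≤ i+1`
      (∀ (x : TopSimplex n) (i : Fin n),
          (i.1 : ℝ) ≤ wsum x → wsum x ≤ i.1 + 1 →
          (R x).1 = ((i.1 + 1 : ℝ) - wsum x) • (vertex n i.castSucc).1 +
              (wsum x - (i.1 : ℝ)) • (vertex n i.succ).1) ∧
      -- `R_n` lands in the spine
      (∀ x : TopSimplex n, InSpine (R x)) ∧
      -- `R_n` restricts to the identity on the spine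
      (∀ p : TopSimplex n, InSpine p → R p = p) ∧
      -- in particular, on the point `(1−t)·e_i + t·e_{i+1}` of the spine we have
      -- `Σ_j j·x_j = i + t` and `R_n` fixes it
      (∀ (i : Fin n) (t : ℝ), 0 ≤ t → t ≤ 1 →
          ∀ p : TopSimplex n,
            p.1 = (1 - t) • (vertex n i.castSucc).1 + t • (vertex n i.succ).1 →
            wsum p = (i.1 : ℝ) + t ∧ R p = p) :=
  ⟨spineRetraction n hn,
    fun _ i h₀ h₁ => tent_eq_of_le_of_le_add_one i h₀ h₁,
    inSpine_spineRetraction hn,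
    fun _ hp => spineRetraction_of_inSpine hn hp,
    fun i t ht₀ ht₁ p hp =>
      ⟨wsum_of_eq_segment i t p hp, spineRetraction_of_inSpine hn ⟨i, t, ht₀, ht₁, hp⟩⟩⟩
end
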